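/- Let n ≥ 1, set b_j = {2 binom(2(n−1), n−1)}^{1/(2n)} e_j with e_j = exp( ((2j − n + 1)/(2n)) π i ) for j = 0, …, 2n−1, and suppose z_j : (1−ε, 1) → ℂ (for some ε ∈ (0,1)) are functions satisfying | z_j(r) − ( −1 + b_j (1−r)^{1/(2n)} − (1/2) b_j² (1−r)^{1/n} ) | ≤ C₀ (1−r)^{3/(2n)} for some constant C₀ > 0 and all r ∈ (1−ε, 1). Then there exist a constant C_n ∈ ℂ depending only on n, a constant C′ > 0, and ε′ ∈ (0, ε) such that for every k ∈ {0, 1, …, 2n−1} and every r ∈ (1−ε′, 1): | Π_{j≠k} (z_k(r) − z_j(r)) − 2n (−1)^{n−1} e_k^{−1} binom(2(n−1), n−1)^{(2n−1)/(2n)} (1−r²)^{(2n−1)/(2n)} (1 − C_n e_k (1−r²)^{1/(2n)}) | ≤ C′ (1−r²)^{(2n−1)/(2n) + 1/n}. -/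

import Mathlib

/-!
Write `δ = 1 - r`, `t = δ^{1/(2n)}`, `C = binom(2(n-1), n-1)` and `β = |b_j| = (2C)^{1/(2n)}`.
Up to `O(t³)`, `z_k - z_j` equals `t (b_k - b_j) (1 - (b_k + b_j) t / 2)`. The `e_j` are the `2n`
roots of `X^{2n} - (-1)^{n-1}`, so differentiating at `e_k` gives
`∏_{j≠k} (e_k - e_j) = 2n e_k^{2n-1} = 2n (-1)^{n-1} e_k⁻¹`, while `∑_j b_j = 0` makes the product
of the second factors `1 - (n-1) b_k t + O(t²)`. Hence the product is
`2n (-1)^{n-1} e_k⁻¹ v^{2n-1} (1 - (n-1) e_k v) + O(t^{2n+1})` with `v = βt = (2Cδ)^{1/(2n)}`.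
Replacing `v` by `q = (C(1-r²))^{1/(2n)}`, whose `2n`-th power is smaller by only `Cδ²`, costs
another `O(t^{2n+1})`; and `t^{2n+1} = δ^{1+1/(2n)} ≤ (1-r²)^{1+1/(2n)}`.
So `C_n = (n-1) C^{1/(2n)}`.
-/

open Complex

/-- The unimodular direction `e_k^{(n)} = e^{((2k-n+1)/(2n)) π i}`. -/
noncomputable def ecoef (n k : ℕ) : ℂ :=
  Complex.exp (((2 * (k : ℂ) - (n : ℂ) + 1) / (2 * (n : ℂ))) * (Real.pi : ℂ) * Complex.I)

/-- The Puiseux coefficient `b_j^{(n)} = {2 binom(2(n-1),n-1)}^{1/(2n)} e_j^{(n)}`. -/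
noncomputable def bcoef (n j : ℕ) : ℂ :=
  Complex.ofReal ((2 * (Nat.choose (2 * (n - 1)) (n - 1)) : ℝ) ^ ((1 : ℝ) / (2 * (n : ℝ)))) *
    ecoef n j

open Finset Polynomial

theorem IsPrimitiveRoot.prod_erase_mul_sub_mul {R : Type*} [CommRing R] [IsDomain R]
    {ζ : R} {N : ℕ} (hζ : IsPrimitiveRoot ζ N) (α : R) (k : Fin N) :
    ∏ j ∈ univ.erase k, (ζ ^ (k : ℕ) * α - ζ ^ (j : ℕ) * α) =
      N * (ζ ^ (k : ℕ) * α) ^ (N - 1) := by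
  have h := X_pow_sub_C_eq_prod hζ k.pos (rfl : α ^ N = α ^ N)
  rw [← Fin.prod_univ_eq_prod_range (fun i => X - C (ζ ^ i * α)),
    ← mul_prod_erase _ _ (mem_univ k)] at h
  have := congrArg (fun p => (derivative p).eval (ζ ^ (k : ℕ) * α)) h
  simpa [derivative_mul, eval_prod, derivative_X_pow, -map_pow, -map_mul] using this.symm

theorem Finset.norm_prod_sub_prod_le {ι E : Type*} [NormedCommRing E] [NormOneClass E]
    (s : Finset ι) (x y : ι → E) {M d : ℝ} (hM : 0 ≤ M) (hd : 0 ≤ d)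
    (hx : ∀ i ∈ s, ‖x i‖ ≤ M) (hy : ∀ i ∈ s, ‖y i‖ ≤ M) (hxy : ∀ i ∈ s, ‖x i - y i‖ ≤ d) :
    ‖∏ i ∈ s, x i - ∏ i ∈ s, y i‖ ≤ #s * d * M ^ (#s - 1) := by
  classical
  induction s using Finset.induction_on with
  | empty => simp
  | insert a s ha ih =>
    simp only [forall_mem_insert] at hx hy hxy
    have hprod_y : ‖∏ i ∈ s, y i‖ ≤ M ^ #s :=
      (norm_prod_le _ _).trans ((prod_le_prod (fun _ _ => norm_nonneg _) hy.2).trans_eq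
        (prod_const M))
    have hpow : M * (#s * d * M ^ (#s - 1)) = #s * d * M ^ #s := by
      rcases Nat.eq_zero_or_pos #s with h | h
      · simp [h]
      · rw [← Nat.sub_add_cancel h, pow_succ]; simp only [Nat.add_sub_cancel]; ring
    rw [prod_insert ha, prod_insert ha, card_insert_of_notMem ha, Nat.add_sub_cancel,
      show x a * ∏ i ∈ s, x i - y a * ∏ i ∈ s, y i
        = x a * (∏ i ∈ s, x i - ∏ i ∈ s, y i) + (x a - y a) * ∏ i ∈ s, y i by ring]
    calc _ ≤ M * (#s * d * M ^ (#s - 1)) + d * M ^ #s :=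
          norm_add_le_of_le ((norm_mul_le _ _).trans (mul_le_mul hx.1 (ih hx.2 hy.2 hxy.2)
            (norm_nonneg _) hM)) ((norm_mul_le _ _).trans (mul_le_mul hxy.1 hprod_y
            (norm_nonneg _) hd))
      _ = ((#s + 1 : ℕ) : ℝ) * d * M ^ #s := by rw [hpow]; push_cast; ring

theorem Finset.norm_prod_one_add_sub_one_add_sum_le {ι E : Type*} [NormedCommRing E]
    [NormOneClass E] (s : Finset ι) (x : ι → E) {ρ : ℝ} (hρ₀ : 0 ≤ ρ) (hρ₁ : ρ ≤ 1)
    (hx : ∀ i ∈ s, ‖x i‖ ≤ ρ) :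
    ‖∏ i ∈ s, (1 + x i) - (1 + ∑ i ∈ s, x i)‖ ≤ 3 ^ #s * ρ ^ 2 := by
  classical
  induction s using Finset.induction_on with
  | empty => simpa using sq_nonneg ρ
  | insert a s ha ih =>
    simp only [forall_mem_insert] at hx
    have hsum : ‖∑ i ∈ s, x i‖ ≤ #s * ρ :=
      (norm_sum_le _ _).trans ((sum_le_card_nsmul _ _ _ hx.2).trans_eq (nsmul_eq_mul _ _))
    have h1 : ‖1 + x a‖ ≤ 2 := (norm_add_le _ _).trans (by rw [norm_one]; linarith [hx.1])
    have hcard : (#s : ℝ) ≤ 3 ^ #s := by exact_mod_cast (Nat.lt_pow_self (by norm_num)).le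
    rw [prod_insert ha, sum_insert ha, card_insert_of_notMem ha,
      show (1 + x a) * ∏ i ∈ s, (1 + x i) - (1 + (x a + ∑ i ∈ s, x i))
        = (1 + x a) * (∏ i ∈ s, (1 + x i) - (1 + ∑ i ∈ s, x i)) + x a * ∑ i ∈ s, x i by ring]
    calc _ ≤ 2 * (3 ^ #s * ρ ^ 2) + ρ * (#s * ρ) :=
          norm_add_le_of_le ((norm_mul_le _ _).trans (mul_le_mul h1 (ih hx.2) (norm_nonneg _)
            zero_le_two)) ((norm_mul_le _ _).trans (mul_le_mul hx.1 hsum (norm_nonneg _) hρ₀))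
      _ ≤ 3 ^ (#s + 1) * ρ ^ 2 := by
          rw [pow_succ (3 : ℝ)]; nlinarith [mul_le_mul_of_nonneg_right hcard (sq_nonneg ρ)]

theorem norm_pow_mul_one_sub_sub_le {q v : ℝ} (hq : 0 < q) (hqv : q ≤ v) (a : ℂ) (m : ℕ) :
    ‖(v : ℂ) ^ m * (1 - a * v) - (q : ℂ) ^ m * (1 - a * q)‖
      ≤ (q⁻¹ + ‖a‖) * (v ^ (m + 1) - q ^ (m + 1)) := by
  have hm : 0 ≤ v ^ m - q ^ m := sub_nonneg.2 (pow_le_pow_left₀ hq.le hqv m)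
  have hm1 : 0 ≤ v ^ (m + 1) - q ^ (m + 1) := sub_nonneg.2 (pow_le_pow_left₀ hq.le hqv _)
  -- from `q v^m ≤ v^(m+1)`
  have hq_mul : q * (v ^ m - q ^ m) ≤ v ^ (m + 1) - q ^ (m + 1) := by
    have := mul_le_mul_of_nonneg_right hqv (pow_nonneg (hq.le.trans hqv) m)
    rw [pow_succ, pow_succ]; nlinarith
  calc _ = ‖(((v ^ m - q ^ m : ℝ)) : ℂ) - a * ((v ^ (m + 1) - q ^ (m + 1) : ℝ) : ℂ)‖ := by
        push_cast; ring_nf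
    _ ≤ (v ^ m - q ^ m) + ‖a‖ * (v ^ (m + 1) - q ^ (m + 1)) := by
        refine (norm_sub_le _ _).trans_eq ?_
        rw [norm_mul, Complex.norm_real, Complex.norm_real, Real.norm_of_nonneg hm,
          Real.norm_of_nonneg hm1]
    _ ≤ q⁻¹ * (v ^ (m + 1) - q ^ (m + 1)) + ‖a‖ * (v ^ (m + 1) - q ^ (m + 1)) := by
        gcongr; rwa [le_inv_mul_iff₀ hq]
    _ = _ := by ring

theorem Real.rpow_eq_rpow_one_div_pow {x e d : ℝ} (hx : 0 ≤ x) (hd : d ≠ 0) {m : ℕ}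
    (he : e * d = m) : x ^ e = (x ^ (1 / d)) ^ m := by
  rw [← Real.rpow_mul_natCast hx, ← he, one_div_mul_eq_div, mul_div_cancel_right₀ _ hd]

theorem ecoef_eq_pow_mul (n : ℕ) (hn : 1 ≤ n) (j : ℕ) :
    ecoef n j = exp (2 * Real.pi * I / (2 * n : ℕ)) ^ j * ecoef n 0 := by
  have : (n : ℂ) ≠ 0 := by exact_mod_cast (by omega : n ≠ 0)
  rw [ecoef, ecoef, ← Complex.exp_nat_mul, ← Complex.exp_add]
  congr 1
  push_cast
  field_simp
  ring

theorem ecoef_pow_two_mul (n : ℕ) (hn : 1 ≤ n) (k : ℕ) : ecoef n k ^ (2 * n) = (-1) ^ (n - 1) := by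
  have : (n : ℂ) ≠ 0 := by exact_mod_cast (by omega : n ≠ 0)
  rw [ecoef, ← Complex.exp_nat_mul, ← Complex.exp_pi_mul_I, ← Complex.exp_nat_mul,
    Complex.exp_eq_exp_iff_exists_int]
  refine ⟨k - n + 1, ?_⟩
  push_cast [Nat.cast_sub hn]
  field_simp
  ring

theorem ecoef_ne_zero (n k : ℕ) : ecoef n k ≠ 0 := exp_ne_zero _

theorem norm_ecoef (n k : ℕ) : ‖ecoef n k‖ = 1 := by
  have : (2 * (k : ℂ) - n + 1) / (2 * n) * Real.pi
      = (((2 * k - n + 1) / (2 * n) * Real.pi : ℝ) : ℂ) := by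
    push_cast; ring
  rw [ecoef, this, norm_exp_ofReal_mul_I]

theorem prod_erase_ecoef_sub (n : ℕ) (hn : 1 ≤ n) (k : Fin (2 * n)) :
    ∏ j ∈ univ.erase k, (ecoef n k - ecoef n j) = 2 * n * (-1) ^ (n - 1) * (ecoef n k)⁻¹ := by
  have hζ := Complex.isPrimitiveRoot_exp (2 * n) (by omega)
  have h := hζ.prod_erase_mul_sub_mul (ecoef n 0) k
  simp only [← ecoef_eq_pow_mul n hn] at h
  have hk : ecoef n k ^ (2 * n - 1) * ecoef n k = (-1) ^ (n - 1) := by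
    rw [← pow_succ, Nat.sub_add_cancel (by omega), ecoef_pow_two_mul n hn]
  rw [h, eq_mul_inv_iff_mul_eq₀ (ecoef_ne_zero n k), mul_assoc, hk]
  push_cast
  ring

theorem sum_ecoef (n : ℕ) (hn : 1 ≤ n) : ∑ j : Fin (2 * n), ecoef n j = 0 := by
  have hζ := Complex.isPrimitiveRoot_exp (2 * n) (by omega)
  rw [Fintype.sum_congr _ _ fun j : Fin (2 * n) => ecoef_eq_pow_mul n hn j, ← sum_mul,
    Fin.sum_univ_eq_sum_range (fun i => exp (2 * Real.pi * I / (2 * n : ℕ)) ^ i),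
    hζ.geom_sum_eq_zero (by omega), zero_mul]

noncomputable def bnorm (n : ℕ) : ℝ :=
  (2 * (Nat.choose (2 * (n - 1)) (n - 1)) : ℝ) ^ ((1 : ℝ) / (2 * (n : ℝ)))

theorem bcoef_eq (n j : ℕ) : bcoef n j = bnorm n * ecoef n j := rfl

theorem one_le_bnorm (n : ℕ) : 1 ≤ bnorm n := by
  refine Real.one_le_rpow ?_ (by positivity)
  have := Nat.choose_pos (Nat.le_mul_of_pos_left (n - 1) two_pos)
  have : (1 : ℝ) ≤ Nat.choose (2 * (n - 1)) (n - 1) := by exact_mod_cast this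
  linarith

theorem bnorm_nonneg (n : ℕ) : 0 ≤ bnorm n := zero_le_one.trans (one_le_bnorm n)

theorem bnorm_pow (n : ℕ) (hn : 1 ≤ n) :
    bnorm n ^ (2 * n) = 2 * (Nat.choose (2 * (n - 1)) (n - 1) : ℝ) := by
  have : (n : ℝ) ≠ 0 := by exact_mod_cast (by omega : n ≠ 0)
  rw [bnorm, ← Real.rpow_mul_natCast (by positivity)]
  push_cast
  rw [div_mul_cancel₀ _ (by positivity), Real.rpow_one]

theorem norm_bcoef (n j : ℕ) : ‖bcoef n j‖ = bnorm n := by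
  rw [bcoef_eq, norm_mul, norm_ecoef, mul_one, Complex.norm_real,
    Real.norm_of_nonneg (bnorm_nonneg n)]

theorem norm_two_mul_neg_one_pow_mul_ecoef_inv (n k : ℕ) :
    ‖2 * (n : ℂ) * (-1) ^ (n - 1) * (ecoef n k)⁻¹‖ = 2 * n := by
  simp [norm_ecoef]

theorem sum_erase_bcoef_add (n : ℕ) (hn : 1 ≤ n) (k : Fin (2 * n)) :
    ∑ j ∈ univ.erase k, (bcoef n k + bcoef n j) = 2 * (n - 1) * bcoef n k := by
  have hsum : ∑ j : Fin (2 * n), bcoef n j = 0 := by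
    simp only [bcoef_eq, ← mul_sum, sum_ecoef n hn, mul_zero]
  rw [← add_sum_erase _ _ (mem_univ k)] at hsum
  rw [sum_add_distrib, sum_const, card_erase_of_mem (mem_univ k), card_univ, Fintype.card_fin,
    nsmul_eq_mul, eq_neg_of_add_eq_zero_right hsum]
  push_cast [Nat.cast_sub (by omega : 1 ≤ 2 * n)]
  ring

-- At `t = (1 - r)^{1/(2n)}` this is the two-term Puiseux expansion of `z_j(r)`.
noncomputable def puiseux2 (n j : ℕ) (t : ℝ) : ℂ :=
  -1 + bcoef n j * t - 1 / 2 * bcoef n j ^ 2 * t ^ 2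

theorem norm_puiseux2_sub_le (n k j : ℕ) {t : ℝ} (ht₀ : 0 ≤ t) (ht₁ : t ≤ 1) :
    ‖puiseux2 n k t - puiseux2 n j t‖ ≤ (2 * bnorm n + bnorm n ^ 2) * t := by
  have hsub : puiseux2 n k t - puiseux2 n j t
      = (bcoef n k - bcoef n j) * t - 1 / 2 * (bcoef n k ^ 2 - bcoef n j ^ 2) * t ^ 2 := by
    unfold puiseux2; ring
  have h1 : ‖bcoef n k - bcoef n j‖ ≤ 2 * bnorm n :=
    (norm_sub_le _ _).trans_eq (by rw [norm_bcoef, norm_bcoef]; ring)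
  have h2 : ‖bcoef n k ^ 2 - bcoef n j ^ 2‖ ≤ 2 * bnorm n ^ 2 :=
    (norm_sub_le _ _).trans_eq (by rw [norm_pow, norm_pow, norm_bcoef, norm_bcoef]; ring)
  have ht2 : t ^ 2 ≤ t := by nlinarith
  rw [hsub]
  refine (norm_sub_le _ _).trans ?_
  simp only [norm_mul, norm_pow, Complex.norm_real, Real.norm_of_nonneg ht₀, one_div, norm_inv,
    Complex.norm_ofNat]
  nlinarith [mul_le_mul_of_nonneg_right h1 ht₀, mul_le_mul_of_nonneg_right h2 (sq_nonneg t),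
    mul_le_mul_of_nonneg_left ht2 (sq_nonneg (bnorm n))]

theorem prod_erase_puiseux2_sub (n : ℕ) (hn : 1 ≤ n) (k : Fin (2 * n)) (t : ℝ) :
    ∏ j ∈ univ.erase k, (puiseux2 n k t - puiseux2 n j t)
      = 2 * (n : ℂ) * (-1) ^ (n - 1) * (ecoef n k)⁻¹ * ((bnorm n * t : ℝ) : ℂ) ^ (2 * n - 1)
        * ∏ j ∈ univ.erase k, (1 - (bcoef n k + bcoef n j) * t / 2) := by
  have hfac : ∀ j : Fin (2 * n), puiseux2 n k t - puiseux2 n j t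
      = (bnorm n * t : ℝ) * (ecoef n k - ecoef n j) * (1 - (bcoef n k + bcoef n j) * t / 2) := by
    intro j; simp only [puiseux2, bcoef_eq]; push_cast; ring
  rw [prod_congr rfl fun j _ => hfac j, prod_mul_distrib, prod_mul_distrib, prod_const,
    card_erase_of_mem (mem_univ k), card_univ, Fintype.card_fin, prod_erase_ecoef_sub n hn k]
  ring

noncomputable def leadingTerm (n k : ℕ) (v : ℝ) : ℂ :=
  (v : ℂ) ^ (2 * n - 1) * (1 - (n - 1) * ecoef n k * v)

theorem norm_prod_erase_puiseux2_sub_sub_leadingTerm_le (n : ℕ) (hn : 1 ≤ n) (k : Fin (2 * n))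
    {t : ℝ} (ht₀ : 0 ≤ t) (hβt : bnorm n * t ≤ 1) :
    ‖∏ j ∈ univ.erase k, (puiseux2 n k t - puiseux2 n j t)
      - 2 * (n : ℂ) * (-1) ^ (n - 1) * (ecoef n k)⁻¹ * leadingTerm n k (bnorm n * t)‖
      ≤ 2 * n * 3 ^ (2 * n - 1) * (bnorm n * t) ^ (2 * n + 1) := by
  set v := bnorm n * t with hv
  have hv₀ : 0 ≤ v := mul_nonneg (bnorm_nonneg n) ht₀
  set x : Fin (2 * n) → ℂ := fun j => -((bcoef n k + bcoef n j) * t / 2)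
  have hx : ∀ j ∈ univ.erase k, ‖x j‖ ≤ v := by
    intro j _
    simp only [x, norm_neg, norm_div, norm_mul, Complex.norm_real, Real.norm_of_nonneg ht₀,
      Complex.norm_ofNat]
    have := (norm_add_le (bcoef n k) (bcoef n j)).trans_eq
      (by rw [norm_bcoef, norm_bcoef]; ring : ‖bcoef n k‖ + ‖bcoef n j‖ = 2 * bnorm n)
    rw [hv]; nlinarith
  have hsum : 1 - (n - 1) * ecoef n k * v = 1 + ∑ j ∈ univ.erase k, x j := by
    simp only [x, sum_neg_distrib, ← sum_div, ← sum_mul]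
    rw [sum_erase_bcoef_add n hn k, bcoef_eq, hv]
    push_cast; ring
  have hprod : ∏ j ∈ univ.erase k, (1 - (bcoef n k + bcoef n j) * t / 2)
      = ∏ j ∈ univ.erase k, (1 + x j) := prod_congr rfl fun j _ => sub_eq_add_neg _ _
  have hrem := (univ.erase k).norm_prod_one_add_sub_one_add_sum_le x hv₀ hβt hx
  rw [card_erase_of_mem (mem_univ k), card_univ, Fintype.card_fin] at hrem
  rw [leadingTerm, prod_erase_puiseux2_sub n hn k, hprod, hsum, ← hv,
    show ∀ c V P S : ℂ, c * V * P - c * (V * S) = c * (V * (P - S)) from fun _ _ _ _ => by ring,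
    norm_mul, norm_two_mul_neg_one_pow_mul_ecoef_inv, norm_mul, norm_pow, Complex.norm_real,
    Real.norm_of_nonneg hv₀]
  calc _ ≤ 2 * (n : ℝ) * (v ^ (2 * n - 1) * (3 ^ (2 * n - 1) * v ^ 2)) := by gcongr
    _ = _ := by
      rw [show 2 * n + 1 = 2 * n - 1 + 2 by omega, pow_add]; ring

theorem norm_leadingTerm_sub_leadingTerm_le (n : ℕ) (hn : 1 ≤ n) (k : ℕ) {t q : ℝ}
    (ht : 0 < t) (hβt : bnorm n * t ≤ 1) (hq : 0 < q)
    (hq2n : q ^ (2 * n) = Nat.choose (2 * (n - 1)) (n - 1) * t ^ (2 * n) * (2 - t ^ (2 * n))) :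
    ‖leadingTerm n k (bnorm n * t) - leadingTerm n k q‖
      ≤ n * Nat.choose (2 * (n - 1)) (n - 1) * t ^ (2 * n + 1) := by
  set C : ℝ := (Nat.choose (2 * (n - 1)) (n - 1) : ℝ)
  set v := bnorm n * t with hv
  have hC : 1 ≤ C := Nat.one_le_cast.2 (Nat.choose_pos (Nat.le_mul_of_pos_left (n - 1) two_pos))
  have htv : t ≤ v := le_mul_of_one_le_left ht.le (one_le_bnorm n)
  have ht₁ : t ≤ 1 := htv.trans hβt
  have htn : t ^ (2 * n) ≤ 1 := pow_le_one₀ ht.le ht₁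
  have htn₀ : 0 < t ^ (2 * n) := pow_pos ht _
  have hv2n : v ^ (2 * n) = 2 * C * t ^ (2 * n) := by rw [hv, mul_pow, bnorm_pow n hn]
  have hn0 : 2 * n ≠ 0 := by omega
  have htq : t ≤ q := by
    refine (pow_le_pow_iff_left₀ ht.le hq.le hn0).1 ?_
    have : 1 ≤ C * (2 - t ^ (2 * n)) := by nlinarith
    rw [hq2n]; nlinarith
  have hqv : q ≤ v := by
    refine (pow_le_pow_iff_left₀ hq.le (ht.le.trans htv) hn0).1 ?_
    rw [hq2n, hv2n]; nlinarith [mul_nonneg (zero_le_one.trans hC) (sq_nonneg (t ^ (2 * n)))]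
  have hnorm : ‖(n - 1 : ℂ) * ecoef n k‖ = n - 1 := by
    rw [norm_mul, norm_ecoef, mul_one, show (n - 1 : ℂ) = ((n - 1 : ℝ) : ℂ) by push_cast; rfl,
      Complex.norm_real, Real.norm_of_nonneg (by simp [hn])]
  have hcmp := norm_pow_mul_one_sub_sub_le hq hqv ((n - 1) * ecoef n k) (2 * n - 1)
  rw [Nat.sub_add_cancel (by omega), hnorm, hq2n, hv2n] at hcmp
  have h₁ : t⁻¹ * (t ^ (2 * n)) ^ 2 ≤ t ^ (2 * n + 1) := by
    rw [← pow_mul, show 2 * n * 2 = (4 * n - 1) + 1 by omega, pow_succ',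
      inv_mul_cancel_left₀ ht.ne']
    exact pow_le_pow_of_le_one ht.le ht₁ (by omega)
  have h₂ : (t ^ (2 * n)) ^ 2 ≤ t ^ (2 * n + 1) := by
    rw [← pow_mul]; exact pow_le_pow_of_le_one ht.le ht₁ (by omega)
  refine hcmp.trans ?_
  have hn1 : (0 : ℝ) ≤ n - 1 := by simp [hn]
  calc _ = (q⁻¹ + (n - 1)) * (C * (t ^ (2 * n)) ^ 2) := by ring
    _ ≤ (t⁻¹ + (n - 1)) * (C * (t ^ (2 * n)) ^ 2) := by gcongr
    _ = C * (t⁻¹ * (t ^ (2 * n)) ^ 2 + (n - 1) * (t ^ (2 * n)) ^ 2) := by ring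
    _ ≤ C * (t ^ (2 * n + 1) + (n - 1) * t ^ (2 * n + 1)) := by gcongr
    _ = n * C * t ^ (2 * n + 1) := by ring

theorem norm_prod_erase_sub_sub_prod_erase_puiseux2_sub_le (n : ℕ) (hn : 1 ≤ n)
    (k : Fin (2 * n)) {C₀ t : ℝ} (hC₀ : 0 ≤ C₀) (ht₀ : 0 ≤ t) (ht₁ : t ≤ 1)
    (z : Fin (2 * n) → ℂ) (hz : ∀ j, ‖z j - puiseux2 n j t‖ ≤ C₀ * t ^ 3) :
    ‖∏ j ∈ univ.erase k, (z k - z j) - ∏ j ∈ univ.erase k, (puiseux2 n k t - puiseux2 n j t)‖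
      ≤ (2 * n - 1 : ℕ) * (2 * C₀) * (2 * bnorm n + bnorm n ^ 2 + 2 * C₀) ^ (2 * n - 2)
        * t ^ (2 * n + 1) := by
  set M := 2 * bnorm n + bnorm n ^ 2 + 2 * C₀
  have hM : 0 ≤ M := by have := bnorm_nonneg n; positivity
  have hd : ∀ j, ‖(z k - z j) - (puiseux2 n k t - puiseux2 n j t)‖ ≤ 2 * C₀ * t ^ 3 := by
    intro j
    rw [show (z k - z j) - (puiseux2 n k t - puiseux2 n j t)
      = (z k - puiseux2 n k t) - (z j - puiseux2 n j t) by ring]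
    linarith [norm_sub_le_of_le (hz k) (hz j)]
  have hw : ∀ j, ‖puiseux2 n k t - puiseux2 n j t‖ ≤ M * t := fun j =>
    (norm_puiseux2_sub_le n k j ht₀ ht₁).trans (by nlinarith)
  have hzw : ∀ j, ‖z k - z j‖ ≤ M * t := by
    intro j
    have ht3 : t ^ 3 ≤ t := pow_le_of_le_one ht₀ ht₁ (by norm_num)
    have := norm_puiseux2_sub_le n k j ht₀ ht₁
    calc ‖z k - z j‖ ≤ ‖(z k - z j) - (puiseux2 n k t - puiseux2 n j t)‖
          + ‖puiseux2 n k t - puiseux2 n j t‖ := norm_le_norm_sub_add _ _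
      _ ≤ M * t := by nlinarith [hd j]
  have hprod := (univ.erase k).norm_prod_sub_prod_le (fun j => z k - z j)
    (fun j => puiseux2 n k t - puiseux2 n j t) (mul_nonneg hM ht₀) (by positivity)
    (fun j _ => hzw j) (fun j _ => hw j) (fun j _ => hd j)
  rw [card_erase_of_mem (mem_univ k), card_univ, Fintype.card_fin] at hprod
  refine hprod.trans_eq ?_
  rw [show 2 * n - 1 - 1 = 2 * n - 2 by omega, mul_pow,
    show 2 * n + 1 = 3 + (2 * n - 2) by omega, pow_add]
  ring

theorem exists_norm_prod_erase_sub_sub_le (n : ℕ) (hn : 1 ≤ n) {C₀ : ℝ} (hC₀ : 0 ≤ C₀) :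
    ∃ K > 0, ∀ (k : Fin (2 * n)) (t q : ℝ) (z : Fin (2 * n) → ℂ), 0 < t → bnorm n * t ≤ 1 →
      0 < q → q ^ (2 * n) = Nat.choose (2 * (n - 1)) (n - 1) * t ^ (2 * n) * (2 - t ^ (2 * n)) →
      (∀ j, ‖z j - puiseux2 n j t‖ ≤ C₀ * t ^ 3) →
      ‖∏ j ∈ univ.erase k, (z k - z j) - 2 * (n : ℂ) * (-1) ^ (n - 1) * (ecoef n k)⁻¹
        * leadingTerm n k q‖ ≤ K * t ^ (2 * n + 1) := by
  have hβ := bnorm_nonneg n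
  have hn₀ : (0 : ℝ) < n := by exact_mod_cast hn
  have hC : (0 : ℝ) < Nat.choose (2 * (n - 1)) (n - 1) :=
    Nat.cast_pos.2 (Nat.choose_pos (Nat.le_mul_of_pos_left (n - 1) two_pos))
  refine ⟨(2 * n - 1 : ℕ) * (2 * C₀) * (2 * bnorm n + bnorm n ^ 2 + 2 * C₀) ^ (2 * n - 2)
    + 2 * n * 3 ^ (2 * n - 1) * bnorm n ^ (2 * n + 1)
    + 2 * n * (n * Nat.choose (2 * (n - 1)) (n - 1)), by positivity, ?_⟩
  intro k t q z ht hβt hq hq2n hz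
  have ht₁ : t ≤ 1 := (le_mul_of_one_le_left ht.le (one_le_bnorm n)).trans hβt
  have h₁ := norm_prod_erase_sub_sub_prod_erase_puiseux2_sub_le n hn k hC₀ ht.le ht₁ z hz
  have h₂ := norm_prod_erase_puiseux2_sub_sub_leadingTerm_le n hn k ht.le hβt
  have h₃ := norm_leadingTerm_sub_leadingTerm_le n hn k ht hβt hq hq2n
  set c : ℂ := 2 * (n : ℂ) * (-1) ^ (n - 1) * (ecoef n k)⁻¹
  have hc : ‖c‖ = 2 * n := norm_two_mul_neg_one_pow_mul_ecoef_inv n k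
  set A := ∏ j ∈ univ.erase k, (z k - z j)
  set B := ∏ j ∈ univ.erase k, (puiseux2 n k t - puiseux2 n j t)
  set V := leadingTerm n k (bnorm n * t)
  set D := leadingTerm n k q
  calc ‖A - c * D‖ ≤ ‖A - B‖ + ‖B - c * V‖ + 2 * n * ‖V - D‖ := by
        refine (norm_sub_le_norm_sub_add_norm_sub _ B _).trans ?_
        rw [add_assoc, ← hc, ← norm_mul, mul_sub]
        exact add_le_add_right (norm_sub_le_norm_sub_add_norm_sub _ _ _) _
    _ ≤ _ := by
        rw [mul_pow] at h₂
        linarith [mul_le_mul_of_nonneg_left h₃ (by positivity : (0 : ℝ) ≤ 2 * n)]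

theorem main_term_eq_leadingTerm (n : ℕ) (hn : 1 ≤ n) (k : ℕ) {x : ℝ} (hx : 0 ≤ x) :
    2 * (n : ℂ) * (-1) ^ (n - 1) * (ecoef n k)⁻¹
        * ((Nat.choose (2 * (n - 1)) (n - 1) : ℝ) ^ ((2 * (n : ℝ) - 1) / (2 * (n : ℝ))) : ℝ)
        * ((x ^ ((2 * (n : ℝ) - 1) / (2 * (n : ℝ))) : ℝ) : ℂ)
        * (1 - (((n - 1) * (Nat.choose (2 * (n - 1)) (n - 1) : ℝ) ^ (1 / (2 * (n : ℝ))) : ℝ) : ℂ)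
          * ecoef n k * ((x ^ (1 / (2 * (n : ℝ))) : ℝ) : ℂ))
      = 2 * (n : ℂ) * (-1) ^ (n - 1) * (ecoef n k)⁻¹
        * leadingTerm n k ((Nat.choose (2 * (n - 1)) (n - 1) * x) ^ (1 / (2 * (n : ℝ)))) := by
  have hd : 2 * (n : ℝ) ≠ 0 := by positivity
  have he : (2 * (n : ℝ) - 1) / (2 * n) * (2 * n) = (2 * n - 1 : ℕ) := by
    rw [div_mul_cancel₀ _ hd]; push_cast [Nat.cast_sub (by omega : 1 ≤ 2 * n)]; ring
  rw [Real.rpow_eq_rpow_one_div_pow (Nat.cast_nonneg _) hd he,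
    Real.rpow_eq_rpow_one_div_pow hx hd he, Real.mul_rpow (Nat.cast_nonneg _) hx, leadingTerm]
  push_cast
  ring

theorem exists_norm_prod_erase_sub_sub_le_rpow (n : ℕ) (hn : 1 ≤ n) {C₀ : ℝ}
    (hC₀ : 0 ≤ C₀) :
    ∃ K > 0, ∀ (k : Fin (2 * n)) (r : ℝ) (z : Fin (2 * n) → ℂ), r < 1 →
      2 * Nat.choose (2 * (n - 1)) (n - 1) * (1 - r) ≤ 1 →
      (∀ j : Fin (2 * n),
        ‖z j - (-1 + bcoef n j * Complex.ofReal ((1 - r) ^ ((1 : ℝ) / (2 * (n : ℝ))))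
          - (1 / 2) * (bcoef n j) ^ 2 * Complex.ofReal ((1 - r) ^ ((1 : ℝ) / (n : ℝ))))‖
        ≤ C₀ * (1 - r) ^ ((3 : ℝ) / (2 * (n : ℝ)))) →
      ‖∏ j ∈ univ.erase k, (z k - z j) - 2 * (n : ℂ) * (-1) ^ (n - 1) * (ecoef n k)⁻¹
        * leadingTerm n k ((Nat.choose (2 * (n - 1)) (n - 1) * (1 - r ^ 2)) ^ (1 / (2 * (n : ℝ))))‖
        ≤ K * (1 - r ^ 2) ^ ((2 * (n : ℝ) - 1) / (2 * (n : ℝ)) + 1 / (n : ℝ)) := by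
  obtain ⟨K, hK, hbound⟩ := exists_norm_prod_erase_sub_sub_le n hn hC₀
  refine ⟨K, hK, fun k r z hr hδC hz => ?_⟩
  set C : ℝ := (Nat.choose (2 * (n - 1)) (n - 1) : ℝ)
  have hC : 1 ≤ C := Nat.one_le_cast.2 (Nat.choose_pos (Nat.le_mul_of_pos_left (n - 1) two_pos))
  have hd : 2 * (n : ℝ) ≠ 0 := by positivity
  set δ := 1 - r with hδ
  have hδ₀ : 0 < δ := by linarith
  have hδ₁ : δ < 1 := by nlinarith
  obtain ⟨t, ht_def⟩ : ∃ t, t = δ ^ (1 / (2 * (n : ℝ))) := ⟨_, rfl⟩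
  have ht : 0 < t := ht_def ▸ Real.rpow_pos_of_pos hδ₀ _
  have hpow : ∀ (e : ℝ) (m : ℕ), e * (2 * n) = m → δ ^ e = t ^ m := fun e m he =>
    ht_def ▸ Real.rpow_eq_rpow_one_div_pow hδ₀.le hd he
  have ht2n : t ^ (2 * n) = δ := by rw [← hpow 1 (2 * n) (by push_cast; ring), Real.rpow_one]
  have hβt : bnorm n * t ≤ 1 := by
    refine (pow_le_one_iff_of_nonneg (mul_nonneg (bnorm_nonneg n) ht.le)
      (by omega : 2 * n ≠ 0)).1 ?_
    rw [mul_pow, bnorm_pow n hn, ht2n]; exact hδC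
  have h1r2 : 1 - r ^ 2 = t ^ (2 * n) * (2 - t ^ (2 * n)) := by rw [ht2n, hδ]; ring
  have h1r2₀ : 0 < 1 - r ^ 2 := by rw [h1r2, ht2n]; nlinarith
  have hq2n : ((C * (1 - r ^ 2)) ^ (1 / (2 * (n : ℝ)))) ^ (2 * n)
      = C * t ^ (2 * n) * (2 - t ^ (2 * n)) := by
    rw [← Real.rpow_eq_rpow_one_div_pow (by positivity) hd (by push_cast; ring : 1 * (2 * (n : ℝ))
      = (2 * n : ℕ)), Real.rpow_one, h1r2, mul_assoc]
  have hz' : ∀ j, ‖z j - puiseux2 n j t‖ ≤ C₀ * t ^ 3 := fun j => by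
    have := hz j
    rw [← ht_def, hpow (1 / n) 2 (by field_simp; ring),
      hpow (3 / (2 * n)) 3 (by field_simp; norm_num)] at this
    simpa [puiseux2] using this
  refine (hbound k t _ z ht hβt (by positivity) hq2n hz').trans ?_
  gcongr
  rw [← hpow ((2 * (n : ℝ) - 1) / (2 * (n : ℝ)) + 1 / (n : ℝ)) (2 * n + 1)
    (by field_simp; push_cast; ring)]
  have hn₁ : (1 : ℝ) ≤ n := by exact_mod_cast hn
  exact Real.rpow_le_rpow hδ₀.le (by rw [h1r2, ht2n]; nlinarith)
    (add_nonneg (div_nonneg (by linarith) (by positivity)) (by positivity))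

/-- if `z_j(r)` obey the Puiseux expansion with coefficients `b_j`, then
`Π_{j≠k}(z_k(r) - z_j(r)) = 2n (-1)^{n-1} e_k⁻¹ binom(2(n-1),n-1)^{(2n-1)/(2n)}
(1-r²)^{(2n-1)/(2n)} (1 - C_n e_k (1-r²)^{1/(2n)}) + O((1-r²)^{(2n-1)/(2n)+1/n})`. -/
theorem stmt_19 (n : ℕ) (hn : 1 ≤ n) (ε : ℝ) (hε : ε ∈ Set.Ioo (0 : ℝ) 1)
    (C₀ : ℝ) (hC₀ : 0 < C₀) (zs : Fin (2 * n) → ℝ → ℂ)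
    (hzs : ∀ (j : Fin (2 * n)), ∀ r ∈ Set.Ioo (1 - ε) 1,
      ‖zs j r - (-1 + bcoef n j * Complex.ofReal ((1 - r) ^ ((1 : ℝ) / (2 * (n : ℝ))))
          - (1 / 2) * (bcoef n j) ^ 2 * Complex.ofReal ((1 - r) ^ ((1 : ℝ) / (n : ℝ))))‖
        ≤ C₀ * (1 - r) ^ ((3 : ℝ) / (2 * (n : ℝ)))) :
    ∃ Cn : ℂ, ∃ C' > 0, ∃ ε' ∈ Set.Ioo (0 : ℝ) ε, ∀ (k : Fin (2 * n)),
      ∀ r ∈ Set.Ioo (1 - ε') 1,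
        ‖(∏ j ∈ Finset.univ.erase k, (zs k r - zs j r))
          - (2 * (n : ℂ)) * (-1 : ℂ) ^ (n - 1) * (ecoef n k)⁻¹
            * Complex.ofReal ((Nat.choose (2 * (n - 1)) (n - 1) : ℝ)
                ^ ((2 * (n : ℝ) - 1) / (2 * (n : ℝ))))
            * Complex.ofReal ((1 - r ^ 2) ^ ((2 * (n : ℝ) - 1) / (2 * (n : ℝ))))
            * (1 - Cn * ecoef n k
                * Complex.ofReal ((1 - r ^ 2) ^ ((1 : ℝ) / (2 * (n : ℝ)))))‖
          ≤ C' * (1 - r ^ 2) ^ ((2 * (n : ℝ) - 1) / (2 * (n : ℝ)) + 1 / (n : ℝ)) := by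
  obtain ⟨K, hK, hbound⟩ := exists_norm_prod_erase_sub_sub_le_rpow n hn hC₀.le
  set C : ℝ := (Nat.choose (2 * (n - 1)) (n - 1) : ℝ)
  have hC : 1 ≤ C := Nat.one_le_cast.2 (Nat.choose_pos (Nat.le_mul_of_pos_left (n - 1) two_pos))
  refine ⟨((n - 1) * C ^ (1 / (2 * (n : ℝ))) : ℝ), K, hK, ε / (2 * C),
    ⟨by have := hε.1; positivity, div_lt_self hε.1 (by linarith)⟩, fun k r ⟨hr₁, hr₂⟩ => ?_⟩
  have hδε : 2 * C * (1 - r) < ε := by rw [← lt_div_iff₀' (by positivity)]; linarith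
  have h1r : 1 - r ≤ C * (1 - r) := le_mul_of_one_le_left (by linarith) hC
  have h1r2 : 0 ≤ 1 - r ^ 2 := by nlinarith [hε.2]
  rw [main_term_eq_leadingTerm n hn k h1r2]
  exact hbound k r (zs · r) hr₂ (by linarith [hε.2]) fun j => hzs j r ⟨by linarith, hr₂⟩
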